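/- The divergence-modified integrator Alg(f)(x) = x + f(x)(1 + div f(x)) is NOT fully affine equivariant: there exist a non-invertible (surjective) affine map a : ℝ² → ℝ¹ and related smooth vector fields f₁ on ℝ² and f₂ on ℝ (f₂ ∘ a = Ta ∘ f₁) such that Alg(f₂) ∘ a ≠ a ∘ Alg(f₁). -/

import Mathlib

/-!
Pushing `divAlg f₁` forward along `a` gives `a z + (1 + divVF f₁ z) • f₂ (a z)`, so it agrees with
`divAlg f₂ (a z)` only if `f₂ (a z) = 0` or the two divergences agree. Relatedness constrains only
the part of `f₁` that `a` sees, while `divVF f₁` also counts the derivative along the fibres of `a`: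
for `a (x, y) = x`, `f₁ (x, y) = (x, y²)` and `f₂ = id`, at `(1, 1)` the divergences are `3` and `1`.
-/

noncomputable def divVF {d : ℕ} (f : (Fin d → ℝ) → (Fin d → ℝ)) (x : Fin d → ℝ) : ℝ :=
  LinearMap.trace ℝ (Fin d → ℝ) (fderiv ℝ f x : (Fin d → ℝ) →ₗ[ℝ] (Fin d → ℝ))

noncomputable def divAlg {d : ℕ} (f : (Fin d → ℝ) → (Fin d → ℝ)) (x : Fin d → ℝ) :
    Fin d → ℝ :=
  x + (1 + divVF f x) • f x

theorem divVF_id {d : ℕ} (x : Fin d → ℝ) : divVF id x = d := by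
  simp [divVF, fderiv_id]

theorem divVF_eq_sum_fderiv_single {d : ℕ} {f : (Fin d → ℝ) → (Fin d → ℝ)} {x : Fin d → ℝ}
    (hf : DifferentiableAt ℝ f x) :
    divVF f x = ∑ i, fderiv ℝ (fun y => f y i) x (Pi.single i 1) := by
  rw [divVF, LinearMap.trace_eq_matrix_trace ℝ (Pi.basisFun ℝ (Fin d)), Matrix.trace]
  refine Finset.sum_congr rfl fun i _ => ?_
  simp [fderiv_apply hf]

theorem divVF_diagonal {d : ℕ} {g : Fin d → ℝ → ℝ} {x : Fin d → ℝ}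
    (hg : ∀ i, DifferentiableAt ℝ (g i) (x i)) :
    divVF (fun y i => g i (y i)) x = ∑ i, deriv (g i) (x i) := by
  have hcomp (i : Fin d) : HasFDerivAt (fun y : Fin d → ℝ => g i (y i))
      (deriv (g i) (x i) • ContinuousLinearMap.proj (R := ℝ) (φ := fun _ : Fin d => ℝ) i) x :=
    (hg i).hasDerivAt.comp_hasFDerivAt x (hasFDerivAt_apply i x)
  rw [divVF_eq_sum_fderiv_single (differentiableAt_pi.2 fun i => (hcomp i).differentiableAt)]
  simp [(hcomp _).fderiv]

theorem map_divAlg_of_map_eq {d e : ℕ} (a : (Fin d → ℝ) →ᵃ[ℝ] (Fin e → ℝ))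
    {f₁ : (Fin d → ℝ) → (Fin d → ℝ)} {f₂ : (Fin e → ℝ) → (Fin e → ℝ)} {z : Fin d → ℝ}
    (h : f₂ (a z) = a.linear (f₁ z)) :
    a (divAlg f₁ z) = a z + (1 + divVF f₁ z) • f₂ (a z) := by
  rw [divAlg, add_comm, ← vadd_eq_add, a.map_vadd, map_smul, h, vadd_eq_add, add_comm]

theorem divAlg_ne_map_divAlg {d e : ℕ} (a : (Fin d → ℝ) →ᵃ[ℝ] (Fin e → ℝ))
    {f₁ : (Fin d → ℝ) → (Fin d → ℝ)} {f₂ : (Fin e → ℝ) → (Fin e → ℝ)} {z : Fin d → ℝ}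
    (h : f₂ (a z) = a.linear (f₁ z)) (hf₂ : f₂ (a z) ≠ 0)
    (hdiv : divVF f₂ (a z) ≠ divVF f₁ z) :
    divAlg f₂ (a z) ≠ a (divAlg f₁ z) := by
  rw [map_divAlg_of_map_eq a h, divAlg, Ne, add_right_inj, (smul_left_injective ℝ hf₂).eq_iff,
    add_right_inj]
  exact hdiv

noncomputable def initAffine (n : ℕ) : (Fin (n + 1) → ℝ) →ᵃ[ℝ] (Fin n → ℝ) :=
  (LinearMap.funLeft ℝ ℝ Fin.castSucc).toAffineMap

@[simp]
theorem initAffine_apply {n : ℕ} (x : Fin (n + 1) → ℝ) (i : Fin n) :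
    initAffine n x i = x i.castSucc := rfl

theorem initAffine_surjective (n : ℕ) : Function.Surjective (initAffine n) :=
  LinearMap.funLeft_surjective_of_injective ℝ ℝ _ (Fin.castSucc_injective n)

theorem initAffine_not_injective (n : ℕ) : ¬ Function.Injective (initAffine n) := by
  intro h
  have := congrFun (@h (Pi.single (Fin.last n) 1) 0 (funext fun i => by
    simp [Fin.castSucc_ne_last])) (Fin.last n)
  simp at this

noncomputable def squareSecondCoord (p : Fin 2 → ℝ) : Fin 2 → ℝ :=
  fun i => ![id, fun t => t ^ 2] i (p i)

theorem contDiff_squareSecondCoord : ContDiff ℝ 1 squareSecondCoord := by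
  refine contDiff_pi.2 fun i => ?_
  fin_cases i
  exacts [contDiff_apply ℝ ℝ (0 : Fin 2), (contDiff_apply ℝ ℝ (1 : Fin 2)).pow 2]

theorem divVF_squareSecondCoord (z : Fin 2 → ℝ) : divVF squareSecondCoord z = 1 + 2 * z 1 := by
  unfold squareSecondCoord
  rw [divVF_diagonal]
  · simp
  · intro i; fin_cases i <;> simp

theorem initAffine_squareSecondCoord (x : Fin 2 → ℝ) :
    initAffine 1 x = (initAffine 1).linear (squareSecondCoord x) := by
  funext i; fin_cases i; rfl

/-- The divergence-modified integrator is NOT fully affine equivariant: there exist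
a surjective non-injective (hence non-invertible) affine map `a : ℝ² → ℝ¹` and
related smooth vector fields `f₁` on `ℝ²` and `f₂` on `ℝ¹` (`f₂ ∘ a = a.linear ∘ f₁`)
such that `Alg f₂ ∘ a ≠ a ∘ Alg f₁`. -/
theorem divAlg_not_fully_affine_equivariant :
    ∃ (a : (Fin 2 → ℝ) →ᵃ[ℝ] (Fin 1 → ℝ))
      (f₁ : (Fin 2 → ℝ) → (Fin 2 → ℝ)) (f₂ : (Fin 1 → ℝ) → (Fin 1 → ℝ)),
      ContDiff ℝ 1 f₁ ∧ ContDiff ℝ 1 f₂ ∧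
      Function.Surjective a ∧ ¬ Function.Injective a ∧
      (∀ x, f₂ (a x) = a.linear (f₁ x)) ∧
      ∃ z, divAlg f₂ (a z) ≠ a (divAlg f₁ z) := by
  refine ⟨initAffine 1, squareSecondCoord, id, contDiff_squareSecondCoord, contDiff_id,
    initAffine_surjective 1, initAffine_not_injective 1, initAffine_squareSecondCoord, 1, ?_⟩
  refine divAlg_ne_map_divAlg _ (initAffine_squareSecondCoord 1) ?_ ?_
  · exact fun h => one_ne_zero (congrFun h 0)
  · rw [divVF_id, divVF_squareSecondCoord]; norm_num
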